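/- Let (W,S) be a Coxeter system, i = (α_1,…,α_l) a reduced word for w ∈ W with l ≥ 1, y ∈ W with y ≤ w, and D = LP_i(y). Suppose 1 ∉ D. Then: (a) ℓ(s_{α_1} y) = ℓ(y) + 1, i.e., y < s_{α_1} y in the Bruhat order; (b) the word i'' := (α_2,…,α_l) is a reduced word for s_{α_1} w, and y ≤ s_{α_1} w; (c) LP_{i''}(y) = { j − 1 : j ∈ D } (as a subset of {1,…,l−1}, where the index k of i'' labels the letter α_{k+1} of i). -/

import Mathlib

open CoxeterSystem

namespace QSC

variable {B W : Type*} [Group W] {M : CoxeterMatrix B} (cs : CoxeterSystem M W)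

/-- The product (in increasing order of `k`) of the simple reflections `s_{α_k}` over the
1-based indices `k ∈ D` with `k > j`, where `ω = (α_1, …, α_l)`; i.e. `w(i)^D_{>j}`. -/
def prodGT (ω : List B) (D : Finset ℕ) (j : ℕ) : W :=
  cs.wordProd (((ω.zipIdx.map Prod.swap).filter fun p => decide (p.1 + 1 ∈ D ∧ j < p.1 + 1)).map Prod.snd)

/-- The product (in increasing order of `k`) of the simple reflections `s_{α_k}` over the
1-based indices `k ∈ D` with `k ≤ j`; i.e. `w(i)^D_{≤j}`. -/
def prodLE (ω : List B) (D : Finset ℕ) (j : ℕ) : W :=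
  cs.wordProd (((ω.zipIdx.map Prod.swap).filter fun p => decide (p.1 + 1 ∈ D ∧ p.1 + 1 ≤ j)).map Prod.snd)

/-- `w(i)^D`, the total product of the subword of `ω` indexed by `D`. -/
def subwordProd (ω : List B) (D : Finset ℕ) : W := prodGT cs ω D 0

/-- `ω` is a reduced word for `w`. -/
def IsReducedWordFor (ω : List B) (w : W) : Prop := cs.wordProd ω = w ∧ cs.IsReduced ω

/-- `D` is a left positive subset of `{1, …, l}` for `ω`:
`ℓ(s_{α_j} ⬝ w(i)^D_{>j}) = ℓ(w(i)^D_{>j}) + 1` for all `j ∈ {1, …, l-1}`.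
Here the 1-based index `j` corresponds to the 0-based index `j - 1` into `ω`,
so below the 1-based index is `(j : ℕ) + 1` for `j : Fin ω.length`. -/
def LeftPositive (ω : List B) (D : Finset ℕ) : Prop :=
  ∀ j : Fin ω.length, (j : ℕ) + 1 < ω.length →
    cs.length (cs.simple (ω.get j) * prodGT cs ω D ((j : ℕ) + 1)) =
      cs.length (prodGT cs ω D ((j : ℕ) + 1)) + 1

/-- `D` is a right positive subset of `{1, …, l}` for `ω`:
`ℓ(w(i)^D_{≤j} ⬝ s_{α_{j+1}}) = ℓ(w(i)^D_{≤j}) + 1` for all `j ∈ {1, …, l-1}`.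
Here the letter `α_{j+1}` sits at 0-based index `j` of `ω`. -/
def RightPositive (ω : List B) (D : Finset ℕ) : Prop :=
  ∀ j : Fin ω.length, 0 < (j : ℕ) →
    cs.length (prodLE cs ω D (j : ℕ) * cs.simple (ω.get j)) =
      cs.length (prodLE cs ω D (j : ℕ)) + 1

/-- The strong Bruhat order on `W`, characterized by the subword property:
`y ≤ w` iff some reduced word for `w` has a subword that is a reduced word for `y`. -/
def BruhatLE (y w : W) : Prop :=
  ∃ ω : List B, IsReducedWordFor cs ω w ∧
    ∃ ω' : List B, ω'.Sublist ω ∧ IsReducedWordFor cs ω' y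

/-! ### Auxiliary lemmas -/

/-- The subword of `ω` selected by `D` (1-based), keeping only indices `> j`. -/
def idxF (ω : List B) (D : Finset ℕ) (j : ℕ) : List B :=
  ((ω.zipIdx.map Prod.swap).filter fun p => decide (p.1 + 1 ∈ D ∧ j < p.1 + 1)).map Prod.snd

lemma prodGT_eq (ω : List B) (D : Finset ℕ) (j : ℕ) :
    prodGT cs ω D j = cs.wordProd (idxF ω D j) := rfl

/-- The shifted index set. -/
def shift (D : Finset ℕ) : Finset ℕ := (D.erase 1).image (· - 1)

lemma mem_shift {D : Finset ℕ} {k : ℕ} (hk : 1 ≤ k) : k ∈ shift D ↔ k + 1 ∈ D := by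
  unfold shift
  simp only [Finset.mem_image, Finset.mem_erase]
  constructor
  · rintro ⟨m, ⟨hm1, hmD⟩, rfl⟩
    have : m = m - 1 + 1 := by omega
    rwa [← this]
  · intro h
    exact ⟨k + 1, ⟨by omega, h⟩, by omega⟩

lemma idxF_cons (a : B) (t : List B) (D : Finset ℕ) (j : ℕ) :
    idxF (a :: t) D j =
      (if 1 ∈ D ∧ j = 0 then [a] else []) ++ idxF t (shift D) (j - 1) := by
  unfold idxF
  rw [List.zipIdx_cons', List.map_cons, List.map_map,
    show (Prod.swap ∘ Prod.map id (· + 1) : B × ℕ → ℕ × B) = Prod.map (· + 1) id ∘ Prod.swap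
      from rfl, ← List.map_map, List.filter_cons, List.filter_map]
  have hcongr : ∀ q ∈ t.zipIdx.map Prod.swap,
      ((fun p : ℕ × B => decide (p.1 + 1 ∈ D ∧ j < p.1 + 1)) ∘
        Prod.map (· + 1) id) q
      = (fun p : ℕ × B => decide (p.1 + 1 ∈ shift D ∧ j - 1 < p.1 + 1)) q := by
    intro q _
    simp only [Function.comp, Prod.map, id, decide_eq_decide]
    rw [mem_shift (by omega : 1 ≤ q.1 + 1)]
    constructor
    · rintro ⟨h1, h2⟩; exact ⟨h1, by omega⟩
    · rintro ⟨h1, h2⟩; exact ⟨h1, by omega⟩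
  rw [List.filter_congr hcongr]
  dsimp only [Prod.swap]
  by_cases h : 1 ∈ D ∧ j = 0
  · have : decide ((0 : ℕ) + 1 ∈ D ∧ j < 0 + 1) = true := by
      simp only [decide_eq_true_iff]; exact ⟨h.1, by omega⟩
    simp only [this]
    simp [List.map_map, Function.comp, Prod.map, h]
  · have : decide ((0 : ℕ) + 1 ∈ D ∧ j < 0 + 1) = false := by
      simp only [decide_eq_false_iff_not]
      intro ⟨h1, h2⟩; exact h ⟨h1, by omega⟩
    simp only [this]
    simp [List.map_map, Function.comp, Prod.map, h]

lemma idxF_sublist (ω : List B) (D : Finset ℕ) (j : ℕ) : (idxF ω D j).Sublist ω := by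
  have h1 : ((ω.zipIdx.map Prod.swap).filter fun p => decide (p.1 + 1 ∈ D ∧ j < p.1 + 1)).Sublist
      (ω.zipIdx.map Prod.swap) :=
    List.filter_sublist
  have := h1.map Prod.snd
  rwa [List.map_map, show (Prod.snd ∘ Prod.swap : B × ℕ → B) = Prod.fst from rfl,
    List.zipIdx_map_fst] at this

lemma leftPositive_tail (a : B) (t : List B) (D : Finset ℕ)
    (hlp : LeftPositive cs (a :: t) D) : LeftPositive cs t (shift D) := by
  intro j hj
  have hj1 : (j : ℕ) + 1 < (a :: t).length := by
    simp only [List.length_cons]; omega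
  have key := hlp ⟨(j : ℕ) + 1, hj1⟩ (by simpa using hj)
  have hget : (a :: t).get ⟨(j : ℕ) + 1, hj1⟩ = t.get j := rfl
  have hprod : ∀ m : ℕ, prodGT cs (a :: t) D (m + 1) = prodGT cs t (shift D) m := by
    intro m
    rw [prodGT_eq, prodGT_eq, idxF_cons]
    simp
  rw [hget, hprod] at key
  simpa using key

lemma idxF_cons_zero_mem (a : B) (t : List B) (D : Finset ℕ) (h : 1 ∈ D) :
    idxF (a :: t) D 0 = a :: idxF t (shift D) 0 := by
  rw [idxF_cons]
  simp [h]

lemma idxF_cons_zero_not_mem (a : B) (t : List B) (D : Finset ℕ) (h : 1 ∉ D) :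
    idxF (a :: t) D 0 = idxF t (shift D) 0 := by
  rw [idxF_cons]
  simp [h]

lemma idxF_cons_succ (a : B) (t : List B) (D : Finset ℕ) (m : ℕ) :
    idxF (a :: t) D (m + 1) = idxF t (shift D) m := by
  rw [idxF_cons]
  simp

lemma isReduced_idxF (ω : List B) (D : Finset ℕ) (hlp : LeftPositive cs ω D) :
    cs.IsReduced (idxF ω D 0) := by
  induction ω generalizing D with
  | nil => simp [idxF, CoxeterSystem.IsReduced]
  | cons a t ih =>
    have hlp' : LeftPositive cs t (shift D) := leftPositive_tail cs a t D hlp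
    have hred' : cs.IsReduced (idxF t (shift D) 0) := ih _ hlp'
    by_cases h : 1 ∈ D
    · rw [idxF_cons_zero_mem a t D h]
      rcases t with _ | ⟨b, t'⟩
      · have hnil : idxF ([] : List B) (shift D) 0 = [] := by simp [idxF]
        rw [hnil]
        unfold CoxeterSystem.IsReduced
        rw [cs.wordProd_cons, cs.wordProd_nil, mul_one]
        simp [cs.length_simple]
      · have h0 : (0 : ℕ) + 1 < (a :: b :: t').length := by simp
        have key := hlp ⟨0, by simp⟩ (by simpa using h0)
        have hget : (a :: b :: t').get ⟨0, by simp⟩ = a := rfl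
        have hprod : prodGT cs (a :: b :: t') D (0 + 1) = prodGT cs (b :: t') (shift D) 0 := by
          rw [prodGT_eq, prodGT_eq, idxF_cons_succ]
        rw [hget, hprod] at key
        unfold CoxeterSystem.IsReduced at hred' ⊢
        rw [cs.wordProd_cons, List.length_cons]
        rw [← prodGT_eq] at hred' ⊢
        rw [key, hred']
    · rw [idxF_cons_zero_not_mem a t D h]
      exact hred'

lemma prodGT_cons_zero_of_not_mem (a : B) (t : List B) (D : Finset ℕ) (h1 : 1 ∉ D) :
    prodGT cs (a :: t) D 0 = prodGT cs t (shift D) 0 := by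
  rw [prodGT_eq, prodGT_eq, idxF_cons_zero_not_mem a t D h1]

/-- Let `ω = (α_1, …, α_l)` be a reduced word for `w` with `l ≥ 1`,
`y ≤ w`, and let `D = LP_i(y)` (i.e. `D` is the unique left positive subset for `ω` with
`w(i)^D = y`). Suppose `1 ∉ D`. Then (a) `ℓ(s_{α_1} y) = ℓ(y) + 1`, i.e.
`y < s_{α_1} y` in the Bruhat order; (b) `ω.tail = (α_2, …, α_l)` is a reduced word for
`s_{α_1} w` and `y ≤ s_{α_1} w`; (c) `LP_{i''}(y) = {j - 1 : j ∈ D}`. -/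
theorem statement4 (w y : W) (ω : List B) (hl : ω ≠ [])
    (hred : IsReducedWordFor cs ω w) (hy : BruhatLE cs y w)
    (D : Finset ℕ) (hD : D ⊆ Finset.Icc 1 ω.length)
    (hlp : LeftPositive cs ω D) (hprod : subwordProd cs ω D = y)
    (h1 : (1 : ℕ) ∉ D) :
    (cs.length (cs.simple (ω.head hl) * y) = cs.length y + 1 ∧
      BruhatLE cs y (cs.simple (ω.head hl) * y) ∧ y ≠ cs.simple (ω.head hl) * y) ∧
    (IsReducedWordFor cs ω.tail (cs.simple (ω.head hl) * w) ∧
      BruhatLE cs y (cs.simple (ω.head hl) * w)) ∧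
    (D.image (fun j => j - 1) ⊆ Finset.Icc 1 ω.tail.length ∧
      LeftPositive cs ω.tail (D.image fun j => j - 1) ∧
      subwordProd cs ω.tail (D.image fun j => j - 1) = y) := by
  obtain ⟨a, t, rfl⟩ := List.exists_cons_of_ne_nil hl
  simp only [List.head_cons, List.tail_cons]
  have hDimg : D.image (fun j => j - 1) = shift D := by
    unfold shift
    rw [Finset.erase_eq_of_notMem h1]
  -- Basic facts
  have hlp' : LeftPositive cs t (shift D) := leftPositive_tail cs a t D hlp
  have hy_eq : cs.wordProd (idxF t (shift D) 0) = y := by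
    rw [← prodGT_eq, ← prodGT_cons_zero_of_not_mem cs a t D h1]
    exact hprod
  have hredL : cs.IsReduced (idxF t (shift D) 0) := isReduced_idxF cs t (shift D) hlp'
  -- (a) length increase
  have ha : cs.length (cs.simple a * y) = cs.length y + 1 := by
    rcases t with _ | ⟨b, t'⟩
    · -- t = [] : D = ∅, y = 1
      have hDempty : D = ∅ := by
        apply Finset.eq_empty_of_forall_notMem
        intro k hk
        have := hD hk
        simp only [List.length_cons, List.length_nil, Finset.mem_Icc] at this
        have : k = 1 := by omega
        exact h1 (this ▸ hk)
      have hy1 : y = 1 := by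
        rw [← hprod]
        unfold subwordProd prodGT
        simp [hDempty]
      rw [hy1, mul_one, cs.length_simple, cs.length_one]
    · have h0 : (0 : ℕ) + 1 < (a :: b :: t').length := by simp
      have key := hlp ⟨0, by simp⟩ (by simpa using h0)
      have hget : (a :: b :: t').get ⟨0, by simp⟩ = a := rfl
      have hprod1 : prodGT cs (a :: b :: t') D (0 + 1) = prodGT cs (b :: t') (shift D) 0 := by
        rw [prodGT_eq, prodGT_eq, idxF_cons_succ]
      have hprod0 : prodGT cs (b :: t') (shift D) 0 = y := by
        rw [← prodGT_cons_zero_of_not_mem cs a _ D h1]; exact hprod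
      rw [hget, hprod1, hprod0] at key
      exact key
  -- reduced word for s_a * y
  have hred_sy : IsReducedWordFor cs (a :: idxF t (shift D) 0) (cs.simple a * y) := by
    constructor
    · rw [cs.wordProd_cons, hy_eq]
    · unfold CoxeterSystem.IsReduced
      rw [cs.wordProd_cons, hy_eq, List.length_cons, ha]
      unfold CoxeterSystem.IsReduced at hredL
      rw [hy_eq] at hredL
      rw [hredL]
  have hredy : IsReducedWordFor cs (idxF t (shift D) 0) y := ⟨hy_eq, hredL⟩
  refine ⟨⟨ha, ?_, ?_⟩, ⟨?_, ?_⟩, ?_, ?_, ?_⟩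
  · -- y ≤ s_a y
    exact ⟨a :: idxF t (shift D) 0, hred_sy,
      idxF t (shift D) 0, List.sublist_cons_self _ _, hredy⟩
  · -- y ≠ s_a y
    intro h
    rw [← h] at ha
    omega
  · -- tail reduced word for s_a w
    have hw : cs.wordProd (a :: t) = w := hred.1
    have hwt : cs.wordProd t = cs.simple a * w := by
      rw [← hw, cs.wordProd_cons, ← mul_assoc, cs.simple_mul_simple_self, one_mul]
    constructor
    · exact hwt
    · unfold CoxeterSystem.IsReduced
      rw [hwt]
      have hle : cs.length (cs.simple a * w) ≤ t.length := by
        rw [← hwt]; exact cs.length_wordProd_le t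
      have hlw : cs.length w = t.length + 1 := by
        have := hred.2
        unfold CoxeterSystem.IsReduced at this
        rw [hw] at this
        simpa using this
      rcases cs.length_simple_mul w a with h | h
      · omega
      · omega
  · -- y ≤ s_a w
    have hw : cs.wordProd (a :: t) = w := hred.1
    have hwt : cs.wordProd t = cs.simple a * w := by
      rw [← hw, cs.wordProd_cons, ← mul_assoc, cs.simple_mul_simple_self, one_mul]
    have hredt : cs.IsReduced t := by
      unfold CoxeterSystem.IsReduced
      rw [hwt]
      have hle : cs.length (cs.simple a * w) ≤ t.length := by
        rw [← hwt]; exact cs.length_wordProd_le t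
      have hlw : cs.length w = t.length + 1 := by
        have := hred.2
        unfold CoxeterSystem.IsReduced at this
        rw [hw] at this
        simpa using this
      rcases cs.length_simple_mul w a with h | h <;> omega
    exact ⟨t, ⟨hwt, hredt⟩, idxF t (shift D) 0, idxF_sublist t (shift D) 0, hredy⟩
  · -- image ⊆ Icc 1 t.length
    rw [hDimg]
    intro k hk
    unfold shift at hk
    simp only [Finset.mem_image, Finset.mem_erase] at hk
    obtain ⟨m, ⟨hm1, hmD⟩, rfl⟩ := hk
    have := hD hmD
    simp only [List.length_cons, Finset.mem_Icc] at this
    simp only [Finset.mem_Icc]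
    omega
  · rw [hDimg]; exact hlp'
  · rw [hDimg]
    unfold subwordProd
    rw [← prodGT_cons_zero_of_not_mem cs a t D h1]
    exact hprod

end QSC
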